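/- arXiv:2107.13656 — 4 statements merged into one kernel-verified Lean document; each statement's English description precedes it below -/
import Mathlib

section
/- If the function J_E(w,s) := −log P_{W|S}(w|s) (negative log conditional density of the learning algorithm), and J_P(w) := E_{P_S}[J_E(w,S)], then E_{P_{W,S}}[J_P(W) − J_E(W,S)] = I_SKL(W;S), the symmetrized KL information between W and S. -/
open MeasureTheory ProbabilityTheory
open scoped ENNReal

/-- Kullback-Leibler divergence `D(P‖Q) = ∫ log (dP/dQ) dP`. -/
noncomputable def klReal {X : Type*} [MeasurableSpace X] (P Q : Measure X) : ℝ :=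
  ∫ x, Real.log (P.rnDeriv Q x).toReal ∂P

/-- Lemma 2 of the paper: for `J_E(w,s) = −log P_{W|S}(w|s)` (negative log conditional
density of the learning algorithm `κ`, with density `f` w.r.t. a reference measure `ν`)
and `J_P(w) = E_{P_S}[J_E(w,S)]`, we have
`E_{P_{W,S}}[J_P(W) − J_E(W,S)] = I_SKL(W;S) = D(P_{W,S}‖P_W⊗P_S) + D(P_W⊗P_S‖P_{W,S})`. -/
theorem stmt_3 {S W : Type*} [MeasurableSpace S] [MeasurableSpace W]
    (μS : Measure S) [IsProbabilityMeasure μS]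
    (ν : Measure W) [SigmaFinite ν]
    (κ : ProbabilityTheory.Kernel S W) [IsMarkovKernel κ]
    (f : S → W → ℝ) (hf : Measurable (Function.uncurry f)) (hfpos : ∀ s w, 0 ≤ f s w)
    (hκ : ∀ s, κ s = ν.withDensity (fun w => ENNReal.ofReal (f s w)))
    (JE : S → W → ℝ) (hJE : ∀ s w, JE s w = -Real.log (f s w))
    (JP : W → ℝ) (hJP : ∀ w, JP w = ∫ s, JE s w ∂μS)
    -- absolute continuity between the joint law and the product of marginals
    (hac : (μS ⊗ₘ κ) ≪ μS.prod (μS ⊗ₘ κ).snd)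
    (hac' : μS.prod (μS ⊗ₘ κ).snd ≪ (μS ⊗ₘ κ))
    -- integrability conditions
    (hint1 : Integrable
      (fun p => Real.log (((μS ⊗ₘ κ).rnDeriv (μS.prod (μS ⊗ₘ κ).snd)) p).toReal) (μS ⊗ₘ κ))
    (hint2 : Integrable
      (fun p => Real.log (((μS.prod (μS ⊗ₘ κ).snd).rnDeriv (μS ⊗ₘ κ)) p).toReal)
      (μS.prod (μS ⊗ₘ κ).snd))
    (hint3 : Integrable (fun p => JE p.1 p.2) (μS ⊗ₘ κ))
    (hint4 : Integrable (fun p => JE p.1 p.2) (μS.prod (μS ⊗ₘ κ).snd))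
    (hint5 : ∀ w, Integrable (fun s => JE s w) μS) :
    ∫ p, (JP p.2 - JE p.1 p.2) ∂(μS ⊗ₘ κ) =
      klReal (μS ⊗ₘ κ) (μS.prod (μS ⊗ₘ κ).snd) +
        klReal (μS.prod (μS ⊗ₘ κ).snd) (μS ⊗ₘ κ) := by
  classical
  set P : Measure (S × W) := μS ⊗ₘ κ with hPdef
  set PW : Measure W := P.snd with hPWdef
  set Q : Measure (S × W) := μS.prod PW with hQdef
  set m : Measure (S × W) := μS.prod ν with hmdef
  have hF_meas : Measurable (fun p : S × W => ENNReal.ofReal (f p.1 p.2)) :=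
    ENNReal.measurable_ofReal.comp hf
  set F : S × W → ℝ≥0∞ := fun p => ENNReal.ofReal (f p.1 p.2) with hFdef
  set g : W → ℝ≥0∞ := fun w => ∫⁻ s, ENNReal.ofReal (f s w) ∂μS with hgdef
  have hg_meas : Measurable g := hF_meas.lintegral_prod_left'
  -- the joint law as a density w.r.t. `μS.prod ν`
  have hP : P = m.withDensity F := by
    ext A hA
    rw [hPdef, Measure.compProd_apply hA, withDensity_apply _ hA,
      ← lintegral_indicator hA, hmdef, lintegral_prod _ (hF_meas.indicator hA).aemeasurable]
    refine lintegral_congr fun s => ?_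
    rw [hκ s, withDensity_apply _ (measurable_prodMk_left hA),
      ← lintegral_indicator (measurable_prodMk_left hA)]
    refine lintegral_congr fun w => ?_
    by_cases h : (s, w) ∈ A <;> simp [Set.indicator, h, hFdef]
  -- the marginal of `W` as a density w.r.t. `ν`
  have hPW : PW = ν.withDensity g := by
    ext A hA
    rw [hPWdef, Measure.snd_apply hA, hP, withDensity_apply _ (measurable_snd hA),
      ← lintegral_indicator (measurable_snd hA), hmdef,
      lintegral_prod_symm _ (hF_meas.indicator (measurable_snd hA)).aemeasurable,
      withDensity_apply _ hA, ← lintegral_indicator hA]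
    refine lintegral_congr fun w => ?_
    by_cases h : w ∈ A <;>
      simp [Set.indicator, Set.mem_preimage, h, hgdef, hFdef]
  -- the product of the marginals as a density w.r.t. `μS.prod ν`
  have hQ : Q = m.withDensity (fun p => g p.2) := by
    ext A hA
    rw [hQdef, Measure.prod_apply hA, withDensity_apply _ hA, ← lintegral_indicator hA,
      hmdef, lintegral_prod _ (((show Measurable fun p : S × W => g p.2 from hg_meas.comp measurable_snd).indicator hA)).aemeasurable]
    refine lintegral_congr fun s => ?_
    rw [hPW, withDensity_apply _ (measurable_prodMk_left hA),
      ← lintegral_indicator (measurable_prodMk_left hA)]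
    refine lintegral_congr fun w => ?_
    by_cases h : (s, w) ∈ A <;> simp [Set.indicator, h]
  have hPm : P ≪ m := hP ▸ withDensity_absolutelyContinuous m F
  have hQm : Q ≪ m := hQ ▸ withDensity_absolutelyContinuous m _
  have hPm' : P.rnDeriv m =ᵐ[m] F := hP ▸ Measure.rnDeriv_withDensity m hF_meas
  have hQm' : Q.rnDeriv m =ᵐ[m] (fun p => g p.2) :=
    hQ ▸ Measure.rnDeriv_withDensity m (hg_meas.comp measurable_snd)
  -- positivity and finiteness facts
  have hF_posP : ∀ᵐ p ∂P, 0 < F p := by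
    filter_upwards [Measure.rnDeriv_pos hPm, hPm.ae_le hPm'] with p h1 h2
    rwa [h2] at h1
  have hG_posQ : ∀ᵐ p ∂Q, 0 < g p.2 := by
    filter_upwards [Measure.rnDeriv_pos hQm, hQm.ae_le hQm'] with p h1 h2
    rwa [h2] at h1
  have hg_fin : ∀ᵐ w ∂ν, g w < ⊤ := by
    refine ae_lt_top hg_meas ?_
    have : ∫⁻ w, g w ∂ν = PW Set.univ := by
      rw [hPW, ← setLIntegral_univ, ← withDensity_apply _ MeasurableSet.univ]
    rw [this]
    exact measure_ne_top _ _
  have hG_finm : ∀ᵐ p ∂m, g p.2 < ⊤ := by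
    have hmeas : MeasurableSet {w | g w < ⊤} := measurableSet_lt hg_meas measurable_const
    have h2 : ∀ᵐ w ∂(Measure.map Prod.snd m), g w < ⊤ := by
      rw [hmdef, Measure.map_snd_prod]
      simpa using hg_fin
    exact (ae_map_iff measurable_snd.aemeasurable hmeas).mp h2
  have hr_finQ : ∀ᵐ p ∂Q, P.rnDeriv Q p < ⊤ := Measure.rnDeriv_lt_top P Q
  -- chain rule for Radon-Nikodym derivatives
  have hchain : P.rnDeriv Q * Q.rnDeriv m =ᵐ[m] P.rnDeriv m :=
    Measure.rnDeriv_mul_rnDeriv hac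
  -- main pointwise identity, a.e. w.r.t. `P`
  have h1 : (fun p => Real.log (P.rnDeriv Q p).toReal)
      =ᵐ[P] fun p => Real.log (f p.1 p.2) - Real.log (g p.2).toReal := by
    filter_upwards [hPm.ae_le hchain, hPm.ae_le hPm', hPm.ae_le hQm', hF_posP,
      hac.ae_le hG_posQ, hPm.ae_le hG_finm, hac.ae_le hr_finQ] with p hc hPF hQG hFp hGp hGf hrf
    rw [Pi.mul_apply, hQG, hPF] at hc
    have hF_toReal : (F p).toReal = f p.1 p.2 := ENNReal.toReal_ofReal (hfpos _ _)
    have htr : (F p).toReal = (P.rnDeriv Q p).toReal * (g p.2).toReal := by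
      rw [← hc, ENNReal.toReal_mul]
    have hrpos : 0 < (P.rnDeriv Q p).toReal := by
      refine ENNReal.toReal_pos ?_ hrf.ne
      intro h0
      rw [h0, zero_mul] at hc
      exact hFp.ne' hc.symm
    have hgpos : 0 < (g p.2).toReal := ENNReal.toReal_pos hGp.ne' hGf.ne
    have h5 : Real.log (f p.1 p.2)
        = Real.log (P.rnDeriv Q p).toReal + Real.log (g p.2).toReal := by
      rw [← hF_toReal, htr, Real.log_mul hrpos.ne' hgpos.ne']
    linarith
  -- the symmetric identity, a.e. w.r.t. `Q`
  have hinv : Q.rnDeriv P =ᵐ[Q] (P.rnDeriv Q)⁻¹ := by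
    filter_upwards [Measure.inv_rnDeriv hac'] with p hp
    rw [Pi.inv_apply, ← hp, Pi.inv_apply, inv_inv]
  have h2 : (fun p => Real.log (Q.rnDeriv P p).toReal)
      =ᵐ[Q] fun p => Real.log (g p.2).toReal - Real.log (f p.1 p.2) := by
    filter_upwards [hinv, hac'.ae_le h1] with p hp h1p
    rw [hp, Pi.inv_apply, ENNReal.toReal_inv, Real.log_inv, h1p]
    ring
  -- rewrite the two KL divergences
  have kl1 : klReal P Q = ∫ p, (-(JE p.1 p.2) - Real.log (g p.2).toReal) ∂P := by
    refine integral_congr_ae ?_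
    filter_upwards [h1] with p hp
    rw [hp, hJE]
    ring
  have kl2 : klReal Q P = ∫ p, (JE p.1 p.2 + Real.log (g p.2).toReal) ∂Q := by
    refine integral_congr_ae ?_
    filter_upwards [h2] with p hp
    rw [hp, hJE]
    ring
  -- integrability of the `log g` term
  have hint1' : Integrable (fun p => -(JE p.1 p.2) - Real.log (g p.2).toReal) P := by
    refine hint1.congr ?_
    filter_upwards [h1] with p hp
    rw [hp, hJE]
    ring
  have hL_P : Integrable (fun p : S × W => Real.log (g p.2).toReal) P := by
    refine ((hint1'.add hint3).neg).congr (Filter.Eventually.of_forall fun p => ?_)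
    simp only [Pi.neg_apply, Pi.add_apply]
    ring
  have hint2' : Integrable (fun p => JE p.1 p.2 + Real.log (g p.2).toReal) Q := by
    refine hint2.congr ?_
    filter_upwards [h2] with p hp
    rw [hp, hJE]
    ring
  have hL_Q : Integrable (fun p : S × W => Real.log (g p.2).toReal) Q := by
    refine (hint2'.sub hint4).congr (Filter.Eventually.of_forall fun p => ?_)
    simp only [Pi.sub_apply]
    ring
  -- marginal integrals
  have hmargP : ∀ (φ : W → ℝ), Measurable φ → ∫ p, φ p.2 ∂P = ∫ w, φ w ∂PW := by
    intro φ hφ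
    rw [hPWdef, Measure.snd,
      integral_map measurable_snd.aemeasurable hφ.aestronglyMeasurable]
  have hmargQ : ∀ (φ : W → ℝ), Measurable φ → ∫ p, φ p.2 ∂Q = ∫ w, φ w ∂PW := by
    intro φ hφ
    have h := integral_map (μ := Q) measurable_snd.aemeasurable
      (f := φ) hφ.aestronglyMeasurable
    rw [← Measure.snd] at h
    rw [← h, hQdef, Measure.snd_prod]
  have hφL : Measurable (fun w => Real.log (g w).toReal) :=
    Real.measurable_log.comp hg_meas.ennreal_toReal
  have hLPQ : ∫ p, Real.log (g p.2).toReal ∂P = ∫ p, Real.log (g p.2).toReal ∂Q := by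
    rw [hmargP _ hφL, hmargQ _ hφL]
  -- `JP` is measurable and integrable
  have hJE_meas : Measurable (Function.uncurry JE) := by
    have : Function.uncurry JE = fun p : S × W => -Real.log (f p.1 p.2) := by
      funext p
      exact hJE p.1 p.2
    rw [this]
    exact (Real.measurable_log.comp hf).neg
  have hJP_meas : Measurable JP := by
    have h := (hJE_meas.stronglyMeasurable.integral_prod_left (μ := μS)).measurable
    have : JP = fun w => ∫ s, JE s w ∂μS := funext hJP
    rw [this]
    exact h
  have hJP_int : Integrable JP PW := by
    refine (hint4.integral_prod_right).congr (Filter.Eventually.of_forall fun w => ?_)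
    exact (hJP w).symm
  have hJPP_int : Integrable (fun p => JP p.2) P := by
    have h := hJP_int
    rw [hPWdef, Measure.snd] at h
    exact (integrable_map_measure h.aestronglyMeasurable measurable_snd.aemeasurable).mp h
  -- the left-hand side
  have hLHS : ∫ p, (JP p.2 - JE p.1 p.2) ∂P
      = (∫ p, JE p.1 p.2 ∂Q) - ∫ p, JE p.1 p.2 ∂P := by
    rw [integral_sub hJPP_int hint3]
    congr 1
    rw [hmargP JP hJP_meas, hQdef, integral_prod_symm _ hint4]
    exact integral_congr_ae (Filter.Eventually.of_forall fun w => (hJP w).symm) |>.symm ▸ rfl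
  have e1 : ∫ p, (-(JE p.1 p.2) - Real.log (g p.2).toReal) ∂P
      = (∫ p, -(JE p.1 p.2) ∂P) - ∫ p, Real.log (g p.2).toReal ∂P :=
    integral_sub hint3.neg hL_P
  have e2 : ∫ p, (JE p.1 p.2 + Real.log (g p.2).toReal) ∂Q
      = (∫ p, JE p.1 p.2 ∂Q) + ∫ p, Real.log (g p.2).toReal ∂Q :=
    integral_add hint4 hL_Q
  have e3 : ∫ p, -(JE p.1 p.2) ∂P = -∫ p, JE p.1 p.2 ∂P := integral_neg _
  rw [hLHS, kl1, kl2, e1, e2, e3, hLPQ]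
  ring
end

section
/- For the (α, π, L_E)-Gibbs algorithm, defined by the posterior P_{W|S=s}(w) = π(w) e^{−α L_E(w,s)} / V(s,α) with V(s,α) = ∫ π(w) e^{−α L_E(w,s)} dw, the expected generalization error equals I_SKL(W;S)/α, i.e., α · E_{P_{W,S}}[L_P(W) − L_E(W,S)] = I_SKL(W;S). -/
open MeasureTheory ProbabilityTheory

/-!
The joint law `P_{W,S}` has density `e^{-α L_E(w,s)} / V(s)` with respect to `P_S ⊗ π`, and
`P_S ⊗ P_W` has density `dP_W/dπ (w)`. Hence
`log dP_{W,S}/d(P_S ⊗ P_W) = -α L_E(w,s) + u(s) + v(w)`.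
`D(P_{W,S} ‖ P_S ⊗ P_W)` and `-D(P_S ⊗ P_W ‖ P_{W,S})` integrate this log-likelihood ratio against
the two measures; these have the same marginals, so the separable part `u(s) + v(w)` cancels in the
sum, leaving `α (E_{P_S ⊗ P_W}[L_E] - E_{P_{W,S}}[L_E])`, and `E_{P_S ⊗ P_W}[L_E] = E_{P_W}[L_P]`.
-/

open scoped ENNReal

section KullbackLeibler

variable {X : Type*} [MeasurableSpace X] {P Q : Measure X} [SigmaFinite P] [SigmaFinite Q]

lemma log_rnDeriv_ae_eq_neg_log_rnDeriv (hQP : Q ≪ P) :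
    (fun x => Real.log (P.rnDeriv Q x).toReal) =ᵐ[Q]
      fun x => -Real.log (Q.rnDeriv P x).toReal := by
  filter_upwards [Measure.inv_rnDeriv hQP] with x hx
  rw [← hx, Pi.inv_apply, ENNReal.toReal_inv, Real.log_inv]

lemma klReal_eq_neg_integral_log_rnDeriv (hQP : Q ≪ P) :
    klReal Q P = -∫ x, Real.log (P.rnDeriv Q x).toReal ∂Q := by
  rw [integral_congr_ae (log_rnDeriv_ae_eq_neg_log_rnDeriv hQP), integral_neg, neg_neg, klReal]

end KullbackLeibler

section Marginals

variable {A B : Type*} [MeasurableSpace A] [MeasurableSpace B]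

lemma integral_add_comp_fst_comp_snd {ρ : Measure (A × B)} {u : A → ℝ} {v : B → ℝ}
    (hu : Integrable u ρ.fst) (hv : Integrable v ρ.snd) :
    ∫ p, (u p.1 + v p.2) ∂ρ = ∫ a, u a ∂ρ.fst + ∫ b, v b ∂ρ.snd := by
  rw [Measure.fst, Measure.snd, integral_map measurable_fst.aemeasurable hu.aestronglyMeasurable,
    integral_map measurable_snd.aemeasurable hv.aestronglyMeasurable]
  exact integral_add (hu.comp_measurable measurable_fst) (hv.comp_measurable measurable_snd)

lemma Integrable.of_add_prod {μ : Measure A} {ν : Measure B} [IsFiniteMeasure μ]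
    [IsFiniteMeasure ν] [NeZero μ] [NeZero ν] {u : A → ℝ} {v : B → ℝ}
    (h : Integrable (fun p : A × B => u p.1 + v p.2) (μ.prod ν)) :
    Integrable u μ ∧ Integrable v ν := by
  obtain ⟨b, hb⟩ := h.prod_left_ae.exists
  obtain ⟨a, ha⟩ := h.prod_right_ae.exists
  exact ⟨(hb.sub (integrable_const (v b))).congr (.of_forall fun a => by simp),
    (ha.sub (integrable_const (u a))).congr (.of_forall fun b => by simp)⟩

lemma integral_integral_comp_snd_eq_integral_prod {μ : Measure A} [SFinite μ]
    {ρ : Measure (A × B)} [SFinite ρ.snd] {f : A × B → ℝ} (hf : Integrable f (μ.prod ρ.snd)) :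
    ∫ p, (∫ a, f (a, p.2) ∂μ) ∂ρ = ∫ p, f p ∂(μ.prod ρ.snd) := by
  rw [integral_prod_symm f hf, Measure.snd,
    integral_map measurable_snd.aemeasurable hf.integral_prod_right.aestronglyMeasurable]

theorem klReal_add_klReal_prod_eq {μ : Measure A} {ν : Measure B} [IsProbabilityMeasure μ]
    [IsProbabilityMeasure ν] {P : Measure (A × B)} [SigmaFinite P] (hfst : P.fst = μ)
    (hsnd : P.snd = ν) (hQP : μ.prod ν ≪ P) {g : A × B → ℝ} {u : A → ℝ} {v : B → ℝ}
    (hlog : ∀ᵐ p ∂P, Real.log (P.rnDeriv (μ.prod ν) p).toReal = g p + (u p.1 + v p.2))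
    (hP : Integrable (fun p => Real.log (P.rnDeriv (μ.prod ν) p).toReal) P)
    (hQ : Integrable (fun p => Real.log ((μ.prod ν).rnDeriv P p).toReal) (μ.prod ν))
    (hgP : Integrable g P) (hgQ : Integrable g (μ.prod ν)) :
    klReal P (μ.prod ν) + klReal (μ.prod ν) P = ∫ p, g p ∂P - ∫ p, g p ∂(μ.prod ν) := by
  set Q := μ.prod ν
  set L := fun p => Real.log (P.rnDeriv Q p).toReal
  set ψ := fun p : A × B => u p.1 + v p.2
  have hψP : ψ =ᵐ[P] L - g := by
    filter_upwards [hlog] with p hp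
    simp only [Pi.sub_apply, L, hp, ψ]
    ring
  have hLQ : Integrable L Q := hQ.neg.congr (log_rnDeriv_ae_eq_neg_log_rnDeriv hQP).symm
  have hψQ : Integrable ψ Q := (hLQ.sub hgQ).congr (Filter.EventuallyEq.symm (hQP.ae_le hψP))
  obtain ⟨hu, hv⟩ := Integrable.of_add_prod hψQ
  have hψ_marginals : ∫ p, ψ p ∂P = ∫ p, ψ p ∂Q := by
    rw [integral_add_comp_fst_comp_snd (hfst ▸ hu) (hsnd ▸ hv), hfst, hsnd,
      integral_add_comp_fst_comp_snd (by rwa [Measure.fst_prod]) (by rwa [Measure.snd_prod]),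
      Measure.fst_prod, Measure.snd_prod]
  have hψP_int : Integrable ψ P := (hP.sub hgP).congr hψP.symm
  have hKL_PQ : klReal P Q = ∫ p, g p ∂P + ∫ p, ψ p ∂P := by
    rw [klReal, integral_congr_ae hlog, integral_add hgP hψP_int]
  have hKL_QP : klReal Q P = -(∫ p, g p ∂Q + ∫ p, ψ p ∂Q) := by
    rw [klReal_eq_neg_integral_log_rnDeriv hQP, integral_congr_ae (hQP.ae_le hlog),
      integral_add hgQ hψQ]
  rw [hKL_PQ, hKL_QP, hψ_marginals]
  ring

end Marginals

section Densities

variable {α β : Type*} [MeasurableSpace α] [MeasurableSpace β]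

lemma compProd_eq_withDensity_prod {μ : Measure α} [SFinite μ] {ν : Measure β} [SFinite ν]
    {κ : Kernel α β} [IsSFiniteKernel κ] {f : α → β → ℝ≥0∞}
    (hf : Measurable (Function.uncurry f)) (hκ : ∀ a, κ a = ν.withDensity (f a)) :
    μ ⊗ₘ κ = (μ.prod ν).withDensity (fun p => f p.1 p.2) := by
  obtain rfl : κ = (Kernel.const α ν).withDensity f :=
    Kernel.ext fun a => by rw [hκ, Kernel.withDensity_apply _ hf, Kernel.const_apply]
  rw [Measure.compProd_withDensity hf, Measure.compProd_const]

lemma log_rnDeriv_withDensity_ofReal {ρ : Measure α} [SigmaFinite ρ] {F : α → ℝ}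
    (hF : Measurable F) (hFpos : ∀ x, 0 < F x) {g : α → ℝ≥0∞} (hg : Measurable g)
    (hg0 : ∀ᵐ x ∂ρ, g x ≠ 0) (hgtop : ∀ᵐ x ∂ρ, g x ≠ ∞) :
    ∀ᵐ x ∂ρ, Real.log ((ρ.withDensity fun x => ENNReal.ofReal (F x)).rnDeriv
      (ρ.withDensity g) x).toReal = Real.log (F x) - Real.log (g x).toReal := by
  filter_upwards [Measure.rnDeriv_withDensity_right (ρ.withDensity fun x => ENNReal.ofReal (F x))
      ρ hg.aemeasurable hg0 hgtop, Measure.rnDeriv_withDensity ρ hF.ennreal_ofReal, hg0, hgtop]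
    with x hdiv hdens h0 htop
  rw [hdiv, hdens, ENNReal.toReal_mul, ENNReal.toReal_inv, ENNReal.toReal_ofReal (hFpos x).le,
    Real.log_mul (inv_ne_zero (ENNReal.toReal_ne_zero.mpr ⟨h0, htop⟩)) (hFpos x).ne',
    Real.log_inv]
  ring

end Densities

section PositiveDensityKernel

variable {α β : Type*} [MeasurableSpace α] [MeasurableSpace β] {μ : Measure α}
  [IsProbabilityMeasure μ] {π : Measure β} [SigmaFinite π] {κ : Kernel α β} [IsMarkovKernel κ]
  {F : α × β → ℝ}

lemma ae_log_rnDeriv_compProd_prod_snd (hF : Measurable F) (hFpos : ∀ p, 0 < F p)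
    (hκ : ∀ a, κ a = π.withDensity fun b => ENNReal.ofReal (F (a, b))) :
    ∀ᵐ p ∂(μ ⊗ₘ κ), Real.log ((μ ⊗ₘ κ).rnDeriv (μ.prod (μ ⊗ₘ κ).snd) p).toReal =
      Real.log (F p) - Real.log ((μ ⊗ₘ κ).snd.rnDeriv π p.2).toReal := by
  set ν := (μ ⊗ₘ κ).snd
  have hP : μ ⊗ₘ κ = (μ.prod π).withDensity fun p => ENNReal.ofReal (F p) :=
    compProd_eq_withDensity_prod (f := fun a b => ENNReal.ofReal (F (a, b))) hF.ennreal_ofReal hκ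
  have hPρ : μ ⊗ₘ κ ≪ μ.prod π := hP ▸ withDensity_absolutelyContinuous _ _
  have hρP : μ.prod π ≪ μ ⊗ₘ κ := hP ▸ withDensity_absolutelyContinuous'
    hF.ennreal_ofReal.aemeasurable (.of_forall fun p => (ENNReal.ofReal_pos.mpr (hFpos p)).ne')
  have hνπ : ν ≪ π := by
    have h : ν ≪ (μ.prod π).snd := hPρ.map measurable_snd
    rwa [Measure.snd_prod] at h
  have hπν : π ≪ ν := by
    have h : (μ.prod π).snd ≪ ν := hρP.map measurable_snd
    rwa [Measure.snd_prod] at h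
  have hQ : μ.prod ν = (μ.prod π).withDensity fun p => ν.rnDeriv π p.2 := by
    conv_lhs => rw [← Measure.withDensity_rnDeriv_eq ν π hνπ]
    exact prod_withDensity_right (Measure.measurable_rnDeriv ν π)
  have hlog := log_rnDeriv_withDensity_ofReal (ρ := μ.prod π) (g := fun p => ν.rnDeriv π p.2) hF
    hFpos ((Measure.measurable_rnDeriv ν π).comp measurable_snd)
    (Measure.quasiMeasurePreserving_snd.ae ((Measure.rnDeriv_pos' hπν).mono fun _ h => h.ne'))
    (Measure.quasiMeasurePreserving_snd.ae (Measure.rnDeriv_ne_top ν π))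
  rw [← hP, ← hQ] at hlog
  exact hPρ.ae_le hlog

end PositiveDensityKernel

lemma measurable_empiricalRisk {ι W Z : Type*} [Fintype ι] [MeasurableSpace W] [MeasurableSpace Z]
    {ℓ : W → Z → ℝ} (hℓ : Measurable (Function.uncurry ℓ)) (c : ℝ) :
    Measurable fun p : (ι → Z) × W => c * ∑ i, ℓ p.2 (p.1 i) :=
  (Finset.measurable_sum _ fun i _ =>
    hℓ.comp (measurable_snd.prodMk ((measurable_pi_apply i).comp measurable_fst))).const_mul c

theorem stmt_4_general {W Z : Type*} [MeasurableSpace W] [MeasurableSpace Z]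
    (n : ℕ)
    (μS : Measure (Fin n → Z)) [IsProbabilityMeasure μS]  -- law `P_S` of the samples
    (ℓ : W → Z → ℝ) (hℓmeas : Measurable (Function.uncurry ℓ))
    (alpha : ℝ)
    (π0 : Measure W) [IsProbabilityMeasure π0]  -- the prior `π`
    (LE : W → (Fin n → Z) → ℝ) (hLE : ∀ w s, LE w s = (1 / (n : ℝ)) * ∑ i, ℓ w (s i))
    (LP : W → ℝ) (hLP : ∀ w, LP w = ∫ s, LE w s ∂μS)
    (V : (Fin n → Z) → ℝ) (hV : ∀ s, V s = ∫ w, Real.exp (-alpha * LE w s) ∂π0)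
    (hVpos : ∀ s, 0 < V s)
    (κ : ProbabilityTheory.Kernel (Fin n → Z) W) [IsMarkovKernel κ]
    (hκ : ∀ s, κ s =
      π0.withDensity (fun w => ENNReal.ofReal (Real.exp (-alpha * LE w s) / V s)))
    -- absolute continuity and integrability conditions
    (hac' : μS.prod (μS ⊗ₘ κ).snd ≪ (μS ⊗ₘ κ))
    (hint1 : Integrable
      (fun p => Real.log (((μS ⊗ₘ κ).rnDeriv (μS.prod (μS ⊗ₘ κ).snd)) p).toReal) (μS ⊗ₘ κ))
    (hint2 : Integrable
      (fun p => Real.log (((μS.prod (μS ⊗ₘ κ).snd).rnDeriv (μS ⊗ₘ κ)) p).toReal)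
      (μS.prod (μS ⊗ₘ κ).snd))
    (hint3 : Integrable (fun p => LE p.2 p.1) (μS ⊗ₘ κ))
    (hint4 : Integrable (fun p => LE p.2 p.1) (μS.prod (μS ⊗ₘ κ).snd)) :
    alpha * ∫ p, (LP p.2 - LE p.2 p.1) ∂(μS ⊗ₘ κ) =
      klReal (μS ⊗ₘ κ) (μS.prod (μS ⊗ₘ κ).snd) +
        klReal (μS.prod (μS ⊗ₘ κ).snd) (μS ⊗ₘ κ) := by
  set P := μS ⊗ₘ κ
  set ν := P.snd
  have hLEm : Measurable fun p : (Fin n → Z) × W => LE p.2 p.1 := by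
    simp_rw [hLE]
    exact measurable_empiricalRisk hℓmeas _
  have hexp : Measurable fun p : (Fin n → Z) × W => Real.exp (-alpha * LE p.2 p.1) :=
    Real.measurable_exp.comp (hLEm.const_mul _)
  have hVm : Measurable V := by
    rw [funext hV]
    exact hexp.stronglyMeasurable.integral_prod_right'.measurable
  have hlog : ∀ᵐ p ∂P, Real.log (P.rnDeriv (μS.prod ν) p).toReal =
      -alpha * LE p.2 p.1 + (-Real.log (V p.1) + -Real.log (ν.rnDeriv π0 p.2).toReal) := by
    filter_upwards [ae_log_rnDeriv_compProd_prod_snd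
      (F := fun p => Real.exp (-alpha * LE p.2 p.1) / V p.1) (hexp.div (hVm.comp measurable_fst))
      (fun p => div_pos (Real.exp_pos _) (hVpos p.1)) hκ] with p hp
    rw [hp, Real.log_div (Real.exp_pos _).ne' (hVpos p.1).ne', Real.log_exp]
    ring
  have hLP_int : Integrable (fun p => LP p.2) P := by
    simp_rw [hLP]
    exact hint4.integral_prod_right.comp_measurable measurable_snd
  have hLP_eq : ∫ p, LP p.2 ∂P = ∫ p, LE p.2 p.1 ∂(μS.prod ν) := by
    simp_rw [hLP]
    exact integral_integral_comp_snd_eq_integral_prod hint4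
  rw [klReal_add_klReal_prod_eq (g := fun p => -alpha * LE p.2 p.1)
    (u := fun s => -Real.log (V s)) (v := fun w => -Real.log (ν.rnDeriv π0 w).toReal)
    (Measure.fst_compProd μS κ) rfl hac' hlog hint1 hint2 (hint3.const_mul _) (hint4.const_mul _),
    integral_const_mul, integral_const_mul, integral_sub hLP_int hint3, hLP_eq]
  ring

/-- For the `(α, π, L_E)`-Gibbs algorithm `P_{W|S=s} = π(w) e^{−α L_E(w,s)} / V(s,α)`,
the expected generalization error times `α` equals the symmetrized KL information:
`α · E_{P_{W,S}}[L_P(W) − L_E(W,S)] = I_SKL(W;S)`. Here the joint law of `(S,W)` is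
`P_S ⊗ₘ κ` and `I_SKL = D(joint‖prod of marginals) + D(prod of marginals‖joint)`. -/
theorem stmt_4 {W Z : Type*} [MeasurableSpace W] [MeasurableSpace Z]
    (n : ℕ) (hn : 0 < n)
    (μS : Measure (Fin n → Z)) [IsProbabilityMeasure μS]  -- law `P_S` of the samples
    (ℓ : W → Z → ℝ) (hℓmeas : Measurable (Function.uncurry ℓ)) (hℓpos : ∀ w z, 0 ≤ ℓ w z)
    (alpha : ℝ) (halpha : 0 < alpha)
    (π0 : Measure W) [IsProbabilityMeasure π0]  -- the prior `π`
    (LE : W → (Fin n → Z) → ℝ) (hLE : ∀ w s, LE w s = (1 / (n : ℝ)) * ∑ i, ℓ w (s i))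
    (LP : W → ℝ) (hLP : ∀ w, LP w = ∫ s, LE w s ∂μS)
    (V : (Fin n → Z) → ℝ) (hV : ∀ s, V s = ∫ w, Real.exp (-alpha * LE w s) ∂π0)
    (hVpos : ∀ s, 0 < V s)
    (hVint : ∀ s, Integrable (fun w => Real.exp (-alpha * LE w s)) π0)
    (κ : ProbabilityTheory.Kernel (Fin n → Z) W) [IsMarkovKernel κ]
    (hκ : ∀ s, κ s =
      π0.withDensity (fun w => ENNReal.ofReal (Real.exp (-alpha * LE w s) / V s)))
    -- absolute continuity and integrability conditions
    (hac : (μS ⊗ₘ κ) ≪ μS.prod (μS ⊗ₘ κ).snd)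
    (hac' : μS.prod (μS ⊗ₘ κ).snd ≪ (μS ⊗ₘ κ))
    (hint1 : Integrable
      (fun p => Real.log (((μS ⊗ₘ κ).rnDeriv (μS.prod (μS ⊗ₘ κ).snd)) p).toReal) (μS ⊗ₘ κ))
    (hint2 : Integrable
      (fun p => Real.log (((μS.prod (μS ⊗ₘ κ).snd).rnDeriv (μS ⊗ₘ κ)) p).toReal)
      (μS.prod (μS ⊗ₘ κ).snd))
    (hint3 : Integrable (fun p => LE p.2 p.1) (μS ⊗ₘ κ))
    (hint4 : Integrable (fun p => LE p.2 p.1) (μS.prod (μS ⊗ₘ κ).snd))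
    (hint5 : ∀ w, Integrable (LE w) μS) :
    alpha * ∫ p, (LP p.2 - LE p.2 p.1) ∂(μS ⊗ₘ κ) =
      klReal (μS ⊗ₘ κ) (μS.prod (μS ⊗ₘ κ).snd) +
        klReal (μS.prod (μS ⊗ₘ κ).snd) (μS ⊗ₘ κ) :=
  stmt_4_general n μS ℓ hℓmeas alpha π0 LE hLE LP hLP V hV hVpos κ hκ hac' hint1 hint2 hint3 hint4
end

section
/- The expected generalization error of the Gibbs algorithm is non-negative: for the (α, π, L_E)-Gibbs posterior with α > 0, E_{P_{W,S}}[L_P(W) − L_E(W,S)] ≥ 0. -/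
/-!
Let `G s t` be the expected empirical risk on the sample `t` of a hypothesis drawn from the
Gibbs posterior of the sample `s`. With `s, t` independent copies of `S`, the generalization
error is `E[G s t] - E[G s s]`. For two Gibbs measures `P_a ∝ e^{-α a} π` and `P_b ∝ e^{-α b} π`,
the density `dP_a / dP_b ∝ e^{-α (a - b)}` is decreasing in `a - b`, so by Chebyshev's
integral inequality `E_{P_a}[a - b] ≤ E_{P_b}[a - b]`, i.e. `G s s + G t t ≤ G s t + G t s`;
averaging over `s, t` gives the claim. Working with lower Lebesgue integrals of the nonnegative
losses keeps the interchanges of integrals free of integrability side conditions.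
-/

open MeasureTheory ProbabilityTheory
open scoped ENNReal

lemma sub_mul_sub_exp_neg_mul_nonneg {α : ℝ} (hα : 0 ≤ α) (p q : ℝ) :
    0 ≤ (p - q) * (Real.exp (-α * q) - Real.exp (-α * p)) := by
  rcases le_total q p with h | h
  · exact mul_nonneg (sub_nonneg.2 h) (sub_nonneg.2 (Real.exp_le_exp.2 (by nlinarith)))
  · exact mul_nonneg_of_nonpos_of_nonpos (sub_nonpos.2 h)
      (sub_nonpos.2 (Real.exp_le_exp.2 (by nlinarith)))

/-- Integrating the cross term over `π ⊗ π` gives twice the difference of the two sides. -/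
theorem integral_mul_mul_integral_le_of_forall_sub_mul_nonneg {W : Type*} [MeasurableSpace W]
    {π : Measure W} [SFinite π] {u F G : W → ℝ}
    (hF : Integrable F π) (hG : Integrable G π)
    (huF : Integrable (fun w => u w * F w) π) (huG : Integrable (fun w => u w * G w) π)
    (h : ∀ x y, 0 ≤ (u x - u y) * (F y * G x - F x * G y)) :
    (∫ w, u w * F w ∂π) * ∫ w, G w ∂π ≤ (∫ w, u w * G w ∂π) * ∫ w, F w ∂π := by
  have expand : ∀ p : W × W, (u p.1 - u p.2) * (F p.2 * G p.1 - F p.1 * G p.2) =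
      (u p.1 * G p.1) * F p.2 - (u p.1 * F p.1) * G p.2
        - (G p.1 * (u p.2 * F p.2) - F p.1 * (u p.2 * G p.2)) := fun p => by ring
  have hsum : 0 ≤ ∫ p : W × W, (u p.1 - u p.2) * (F p.2 * G p.1 - F p.1 * G p.2) ∂π.prod π :=
    integral_nonneg fun p => h p.1 p.2
  simp only [expand] at hsum
  rw [integral_sub ((huG.mul_prod hF).sub' (huF.mul_prod hG))
      ((hG.mul_prod huF).sub' (hF.mul_prod huG)),
    integral_sub (huG.mul_prod hF) (huF.mul_prod hG),
    integral_sub (hG.mul_prod huF) (hF.mul_prod huG),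
    integral_prod_mul (fun w => u w * G w) F, integral_prod_mul (fun w => u w * F w) G,
    integral_prod_mul G (fun w => u w * F w), integral_prod_mul F (fun w => u w * G w)] at hsum
  linarith

section Gibbs

variable {W : Type*} [MeasurableSpace W] (π : Measure W) (α : ℝ) (a : W → ℝ)

noncomputable def gibbsDensity (w : W) : ℝ :=
  Real.exp (-α * a w) / ∫ v, Real.exp (-α * a v) ∂π

noncomputable def gibbsMeasure : Measure W :=
  π.withDensity fun w => ENNReal.ofReal (gibbsDensity π α a w)

variable {π α a}

lemma gibbsDensity_nonneg (w : W) : 0 ≤ gibbsDensity π α a w :=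
  div_nonneg (Real.exp_nonneg _) (integral_nonneg fun _ => Real.exp_nonneg _)

lemma measurable_gibbsDensity (ha : Measurable a) : Measurable (gibbsDensity π α a) :=
  (Real.measurable_exp.comp (ha.const_mul (-α))).div_const _

lemma integrable_gibbsDensity (hZ : 0 < ∫ w, Real.exp (-α * a w) ∂π) :
    Integrable (gibbsDensity π α a) π :=
  (Integrable.of_integral_ne_zero hZ.ne').div_const _

lemma integral_gibbsDensity (hZ : 0 < ∫ w, Real.exp (-α * a w) ∂π) :
    ∫ w, gibbsDensity π α a w ∂π = 1 := by
  simp only [gibbsDensity]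
  rw [integral_div, div_self hZ.ne']

lemma integral_gibbsMeasure (ha : Measurable a) (g : W → ℝ) :
    ∫ w, g w ∂gibbsMeasure π α a = ∫ w, g w * gibbsDensity π α a w ∂π := by
  rw [gibbsMeasure, integral_withDensity_eq_integral_toReal_smul
    (measurable_gibbsDensity ha).ennreal_ofReal (ae_of_all _ fun _ => ENNReal.ofReal_lt_top)]
  simp only [ENNReal.toReal_ofReal (gibbsDensity_nonneg _), smul_eq_mul, mul_comm]

lemma integrable_gibbsMeasure_iff (ha : Measurable a) {g : W → ℝ} :
    Integrable g (gibbsMeasure π α a) ↔ Integrable (fun w => g w * gibbsDensity π α a w) π := by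
  rw [gibbsMeasure, integrable_withDensity_iff_integrable_smul'
    (measurable_gibbsDensity ha).ennreal_ofReal (ae_of_all _ fun _ => ENNReal.ofReal_lt_top)]
  simp only [ENNReal.toReal_ofReal (gibbsDensity_nonneg _), smul_eq_mul, mul_comm]

lemma integral_sub_gibbsMeasure_le [SFinite π] (hα : 0 ≤ α) {b : W → ℝ}
    (ha : Measurable a) (hb : Measurable b)
    (hZa : 0 < ∫ w, Real.exp (-α * a w) ∂π) (hZb : 0 < ∫ w, Real.exp (-α * b w) ∂π)
    (hua : Integrable (fun w => a w - b w) (gibbsMeasure π α a))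
    (hub : Integrable (fun w => a w - b w) (gibbsMeasure π α b)) :
    ∫ w, a w - b w ∂gibbsMeasure π α a ≤ ∫ w, a w - b w ∂gibbsMeasure π α b := by
  have hcross : ∀ x y, 0 ≤ (a x - b x - (a y - b y)) *
      (gibbsDensity π α a y * gibbsDensity π α b x
        - gibbsDensity π α a x * gibbsDensity π α b y) := by
    intro x y
    refine (div_nonneg (sub_mul_sub_exp_neg_mul_nonneg hα (a x + b y) (a y + b x))
      (mul_pos hZa hZb).le).trans_eq ?_
    simp only [gibbsDensity, mul_add, Real.exp_add]
    field_simp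
    ring
  have h := integral_mul_mul_integral_le_of_forall_sub_mul_nonneg (integrable_gibbsDensity hZa)
    (integrable_gibbsDensity hZb) ((integrable_gibbsMeasure_iff ha).1 hua)
    ((integrable_gibbsMeasure_iff hb).1 hub) hcross
  rwa [integral_gibbsDensity hZa, integral_gibbsDensity hZb, mul_one, mul_one,
    ← integral_gibbsMeasure ha, ← integral_gibbsMeasure hb] at h

/-- Finite whatever the tails of `a`, since `a e^{-α a} ≤ 1 / α`. -/
lemma lintegral_gibbsMeasure_self_lt_top [IsFiniteMeasure π] (hα : 0 < α) (ha : Measurable a) :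
    ∫⁻ w, ENNReal.ofReal (a w) ∂gibbsMeasure π α a < ∞ := by
  have hbound : ∀ w, a w * gibbsDensity π α a w ≤ 1 / α / ∫ v, Real.exp (-α * a v) ∂π := by
    intro w
    rw [gibbsDensity, ← mul_div_assoc]
    refine div_le_div_of_nonneg_right ?_ (integral_nonneg fun _ => Real.exp_nonneg _)
    rw [neg_mul, Real.exp_neg, ← div_eq_mul_inv, div_le_div_iff₀ (Real.exp_pos _) hα]
    linarith [Real.add_one_le_exp (α * a w)]
  calc ∫⁻ w, ENNReal.ofReal (a w) ∂gibbsMeasure π α a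
      = ∫⁻ w, ENNReal.ofReal (a w * gibbsDensity π α a w) ∂π := by
        rw [gibbsMeasure, lintegral_withDensity_eq_lintegral_mul _
          (measurable_gibbsDensity ha).ennreal_ofReal ha.ennreal_ofReal]
        refine lintegral_congr fun w => ?_
        rw [Pi.mul_apply, ← ENNReal.ofReal_mul (gibbsDensity_nonneg w), mul_comm]
    _ ≤ ∫⁻ _, ENNReal.ofReal (1 / α / ∫ v, Real.exp (-α * a v) ∂π) ∂π :=
        lintegral_mono fun w => ENNReal.ofReal_le_ofReal (hbound w)
    _ < ∞ := by
        rw [lintegral_const]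
        exact ENNReal.mul_lt_top ENNReal.ofReal_lt_top (measure_lt_top _ _)

lemma lintegral_gibbsMeasure_add_le [IsFiniteMeasure π] (hα : 0 < α) {b : W → ℝ}
    (ha : Measurable a) (hb : Measurable b) (ha0 : ∀ w, 0 ≤ a w) (hb0 : ∀ w, 0 ≤ b w)
    (hZa : 0 < ∫ w, Real.exp (-α * a w) ∂π) (hZb : 0 < ∫ w, Real.exp (-α * b w) ∂π) :
    ∫⁻ w, ENNReal.ofReal (a w) ∂gibbsMeasure π α a + ∫⁻ w, ENNReal.ofReal (b w) ∂gibbsMeasure π α b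
      ≤ ∫⁻ w, ENNReal.ofReal (a w) ∂gibbsMeasure π α b
        + ∫⁻ w, ENNReal.ofReal (b w) ∂gibbsMeasure π α a := by
  by_cases hfin : ∫⁻ w, ENNReal.ofReal (a w) ∂gibbsMeasure π α b ≠ ∞ ∧
      ∫⁻ w, ENNReal.ofReal (b w) ∂gibbsMeasure π α a ≠ ∞
  swap
  · rw [not_and_or, not_not, not_not] at hfin
    rcases hfin with h | h <;> simp [h]
  have integrable_a := fun m : Measure W =>
    lintegral_ofReal_ne_top_iff_integrable (μ := m) ha.aestronglyMeasurable (ae_of_all _ ha0)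
  have integrable_b := fun m : Measure W =>
    lintegral_ofReal_ne_top_iff_integrable (μ := m) hb.aestronglyMeasurable (ae_of_all _ hb0)
  have iaa := (integrable_a _).1 (lintegral_gibbsMeasure_self_lt_top (π := π) hα ha).ne
  have ibb := (integrable_b _).1 (lintegral_gibbsMeasure_self_lt_top (π := π) hα hb).ne
  have iab := (integrable_a _).1 hfin.1
  have iba := (integrable_b _).1 hfin.2
  have h := integral_sub_gibbsMeasure_le hα.le ha hb hZa hZb (iaa.sub' iba) (iab.sub' ibb)
  rw [integral_sub iaa iba, integral_sub iab ibb] at h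
  rw [← ofReal_integral_eq_lintegral_ofReal iaa (ae_of_all _ ha0),
    ← ofReal_integral_eq_lintegral_ofReal ibb (ae_of_all _ hb0),
    ← ofReal_integral_eq_lintegral_ofReal iab (ae_of_all _ ha0),
    ← ofReal_integral_eq_lintegral_ofReal iba (ae_of_all _ hb0),
    ← ENNReal.ofReal_add (integral_nonneg ha0) (integral_nonneg hb0),
    ← ENNReal.ofReal_add (integral_nonneg ha0) (integral_nonneg hb0)]
  exact ENNReal.ofReal_le_ofReal (by linarith)

end Gibbs

lemma integral_sub_nonneg_of_lintegral_ofReal_le {X : Type*} [MeasurableSpace X] {μ : Measure X}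
    {f g : X → ℝ} (hf : AEStronglyMeasurable f μ) (hg : AEStronglyMeasurable g μ)
    (hf0 : ∀ x, 0 ≤ f x) (hg0 : ∀ x, 0 ≤ g x)
    (hfg : ∫⁻ x, ENNReal.ofReal (f x) ∂μ ≤ ∫⁻ x, ENNReal.ofReal (g x) ∂μ)
    (hg_fin : ∫⁻ x, ENNReal.ofReal (g x) ∂μ < ∞) :
    0 ≤ ∫ x, g x - f x ∂μ := by
  have ig := (lintegral_ofReal_ne_top_iff_integrable hg (ae_of_all _ hg0)).1 hg_fin.ne
  have if' := (lintegral_ofReal_ne_top_iff_integrable hf (ae_of_all _ hf0)).1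
    (hfg.trans_lt hg_fin).ne
  rw [integral_sub ig if', sub_nonneg, integral_eq_lintegral_of_nonneg_ae (ae_of_all _ hf0) hf,
    integral_eq_lintegral_of_nonneg_ae (ae_of_all _ hg0) hg]
  exact ENNReal.toReal_mono hg_fin.ne hfg

lemma lintegral_diag_le_lintegral_lintegral {Ω : Type*} [MeasurableSpace Ω] (μ : Measure Ω)
    [IsProbabilityMeasure μ] {G : Ω → Ω → ℝ≥0∞} (hG : Measurable (Function.uncurry G))
    (h : ∀ s t, G s s + G t t ≤ G s t + G t s) :
    ∫⁻ s, G s s ∂μ ≤ ∫⁻ s, ∫⁻ t, G s t ∂μ ∂μ := by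
  have hsymm : ∫⁻ s, ∫⁻ t, G t s ∂μ ∂μ = ∫⁻ s, ∫⁻ t, G s t ∂μ ∂μ :=
    lintegral_lintegral_swap (hG.comp measurable_swap).aemeasurable
  have h2 : 2 * ∫⁻ s, G s s ∂μ ≤ 2 * ∫⁻ s, ∫⁻ t, G s t ∂μ ∂μ :=
    calc 2 * ∫⁻ s, G s s ∂μ = ∫⁻ s, ∫⁻ t, (G s s + G t t) ∂μ ∂μ := by
          simp only [lintegral_add_left measurable_const, lintegral_const, measure_univ, mul_one,
            lintegral_add_right _ measurable_const]
          ring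
      _ ≤ ∫⁻ s, ∫⁻ t, (G s t + G t s) ∂μ ∂μ :=
          lintegral_mono fun s => lintegral_mono fun t => h s t
      _ = 2 * ∫⁻ s, ∫⁻ t, G s t ∂μ ∂μ := by
          have hrow : Measurable fun s => ∫⁻ t, G s t ∂μ := hG.lintegral_prod_right'
          rw [two_mul]
          nth_rw 2 [← hsymm]
          rw [← lintegral_add_left hrow]
          exact lintegral_congr fun s => lintegral_add_left (hG.comp measurable_prodMk_left) _
  exact (ENNReal.mul_le_mul_iff_right two_ne_zero ENNReal.ofNat_ne_top).1 h2

theorem integral_integral_sub_nonneg_of_lintegral_cross_le {Ω W : Type*} [MeasurableSpace Ω]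
    [MeasurableSpace W] (μ : Measure Ω) [IsProbabilityMeasure μ] (κ : Kernel Ω W)
    [IsSFiniteKernel κ] {L : W → Ω → ℝ} (hL : Measurable (Function.uncurry L))
    (hL0 : ∀ w s, 0 ≤ L w s) (hLint : ∀ w, Integrable (L w) μ)
    (hfin : Integrable (fun p => L p.2 p.1) (μ.prod (μ ⊗ₘ κ).snd))
    (hcross : ∀ s t, ∫⁻ w, ENNReal.ofReal (L w s) ∂κ s + ∫⁻ w, ENNReal.ofReal (L w t) ∂κ t
      ≤ ∫⁻ w, ENNReal.ofReal (L w s) ∂κ t + ∫⁻ w, ENNReal.ofReal (L w t) ∂κ s) :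
    0 ≤ ∫ p, ((∫ t, L p.2 t ∂μ) - L p.2 p.1) ∂(μ ⊗ₘ κ) := by
  have hLswap : Measurable fun p : Ω × W => L p.2 p.1 := hL.comp measurable_swap
  have hLP : StronglyMeasurable fun w => ∫ t, L w t ∂μ :=
    hL.stronglyMeasurable.integral_prod_right'
  have hofReal : ∀ w, ENNReal.ofReal (∫ t, L w t ∂μ) = ∫⁻ t, ENNReal.ofReal (L w t) ∂μ :=
    fun w => ofReal_integral_eq_lintegral_ofReal (hLint w) (ae_of_all _ (hL0 w))
  have hpop : ∫⁻ p, ENNReal.ofReal (∫ t, L p.2 t ∂μ) ∂(μ ⊗ₘ κ)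
      = ∫⁻ p, ENNReal.ofReal (L p.2 p.1) ∂(μ.prod (μ ⊗ₘ κ).snd) := by
    have hrow : Measurable fun w => ∫⁻ t, ENNReal.ofReal (L w t) ∂μ :=
      hL.ennreal_ofReal.lintegral_prod_right'
    rw [lintegral_prod_symm _ hLswap.ennreal_ofReal.aemeasurable]
    dsimp only
    rw [Measure.snd, lintegral_map hrow measurable_snd]
    simp only [hofReal]
  have hpop' : ∫⁻ p, ENNReal.ofReal (∫ t, L p.2 t ∂μ) ∂(μ ⊗ₘ κ)
      = ∫⁻ s, ∫⁻ t, ∫⁻ w, ENNReal.ofReal (L w t) ∂κ s ∂μ ∂μ := by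
    have hLPsnd : Measurable fun p : Ω × W => ENNReal.ofReal (∫ t, L p.2 t ∂μ) :=
      (hLP.measurable.comp measurable_snd).ennreal_ofReal
    rw [Measure.lintegral_compProd hLPsnd]
    simp only [hofReal]
    exact lintegral_congr fun s => lintegral_lintegral_swap hL.ennreal_ofReal.aemeasurable
  have hG : Measurable (Function.uncurry fun s t => ∫⁻ w, ENNReal.ofReal (L w t) ∂κ s) :=
    Measurable.lintegral_kernel_prod_right' (κ := κ.comap Prod.fst measurable_fst)
      (hL.comp (measurable_snd.prodMk measurable_fst.snd)).ennreal_ofReal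
  refine integral_sub_nonneg_of_lintegral_ofReal_le hLswap.aestronglyMeasurable
    (hLP.comp_measurable measurable_snd).aestronglyMeasurable (fun p => hL0 _ _)
    (fun p => integral_nonneg (hL0 p.2)) ?_ ?_
  · rw [Measure.lintegral_compProd hLswap.ennreal_ofReal, hpop']
    exact lintegral_diag_le_lintegral_lintegral μ hG fun s t => (hcross s t).trans_eq (add_comm _ _)
  · rw [hpop]
    exact hfin.lintegral_lt_top

theorem stmt_5_general {W Z : Type*} [MeasurableSpace W] [MeasurableSpace Z]
    (n : ℕ)
    (μS : Measure (Fin n → Z)) [IsProbabilityMeasure μS]  -- law `P_S` of the samples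
    (ℓ : W → Z → ℝ) (hℓmeas : Measurable (Function.uncurry ℓ)) (hℓpos : ∀ w z, 0 ≤ ℓ w z)
    (alpha : ℝ) (halpha : 0 < alpha)
    (π0 : Measure W) [IsProbabilityMeasure π0]  -- the prior `π`
    (LE : W → (Fin n → Z) → ℝ) (hLE : ∀ w s, LE w s = (1 / (n : ℝ)) * ∑ i, ℓ w (s i))
    (LP : W → ℝ) (hLP : ∀ w, LP w = ∫ s, LE w s ∂μS)
    (V : (Fin n → Z) → ℝ) (hV : ∀ s, V s = ∫ w, Real.exp (-alpha * LE w s) ∂π0)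
    (hVpos : ∀ s, 0 < V s)
    (κ : ProbabilityTheory.Kernel (Fin n → Z) W) [IsMarkovKernel κ]
    (hκ : ∀ s, κ s =
      π0.withDensity (fun w => ENNReal.ofReal (Real.exp (-alpha * LE w s) / V s)))
    -- absolute continuity and integrability conditions
    (hint4 : Integrable (fun p => LE p.2 p.1) (μS.prod (μS ⊗ₘ κ).snd))
    (hint5 : ∀ w, Integrable (LE w) μS) :
    0 ≤ ∫ p, (LP p.2 - LE p.2 p.1) ∂(μS ⊗ₘ κ) := by
  have hLE_meas : Measurable (Function.uncurry LE) := by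
    have hLE' : Function.uncurry LE = fun p : W × (Fin n → Z) => 1 / (n : ℝ) * ∑ i, ℓ p.1 (p.2 i) :=
      funext fun p => hLE p.1 p.2
    rw [hLE']
    exact (Finset.measurable_sum _ fun i _ => hℓmeas.comp
      (measurable_fst.prodMk ((measurable_pi_apply i).comp measurable_snd))).const_mul _
  have hLE_nonneg : ∀ w s, 0 ≤ LE w s := fun w s => by
    rw [hLE]
    exact mul_nonneg (by positivity) (Finset.sum_nonneg fun i _ => hℓpos _ _)
  have hgibbs : ∀ s, κ s = gibbsMeasure π0 alpha fun w => LE w s := fun s => by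
    rw [hκ, hV]
    rfl
  have hZ : ∀ s, 0 < ∫ w, Real.exp (-alpha * LE w s) ∂π0 := fun s => hV s ▸ hVpos s
  simp only [hLP]
  refine integral_integral_sub_nonneg_of_lintegral_cross_le μS κ hLE_meas hLE_nonneg hint5 hint4
    fun s t => ?_
  rw [hgibbs s, hgibbs t]
  exact lintegral_gibbsMeasure_add_le halpha (hLE_meas.comp measurable_prodMk_right)
    (hLE_meas.comp measurable_prodMk_right) (hLE_nonneg · s) (hLE_nonneg · t) (hZ s) (hZ t)

/-- The expected generalization error of the `(α, π, L_E)`-Gibbs algorithm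
`P_{W|S=s} = π(w) e^{−α L_E(w,s)} / V(s,α)` is non-negative:
`E_{P_{W,S}}[L_P(W) − L_E(W,S)] ≥ 0`. -/
theorem stmt_5 {W Z : Type*} [MeasurableSpace W] [MeasurableSpace Z]
    (n : ℕ) (hn : 0 < n)
    (μS : Measure (Fin n → Z)) [IsProbabilityMeasure μS]  -- law `P_S` of the samples
    (ℓ : W → Z → ℝ) (hℓmeas : Measurable (Function.uncurry ℓ)) (hℓpos : ∀ w z, 0 ≤ ℓ w z)
    (alpha : ℝ) (halpha : 0 < alpha)
    (π0 : Measure W) [IsProbabilityMeasure π0]  -- the prior `π`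
    (LE : W → (Fin n → Z) → ℝ) (hLE : ∀ w s, LE w s = (1 / (n : ℝ)) * ∑ i, ℓ w (s i))
    (LP : W → ℝ) (hLP : ∀ w, LP w = ∫ s, LE w s ∂μS)
    (V : (Fin n → Z) → ℝ) (hV : ∀ s, V s = ∫ w, Real.exp (-alpha * LE w s) ∂π0)
    (hVpos : ∀ s, 0 < V s)
    (hVint : ∀ s, Integrable (fun w => Real.exp (-alpha * LE w s)) π0)
    (κ : ProbabilityTheory.Kernel (Fin n → Z) W) [IsMarkovKernel κ]
    (hκ : ∀ s, κ s =
      π0.withDensity (fun w => ENNReal.ofReal (Real.exp (-alpha * LE w s) / V s)))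
    -- absolute continuity and integrability conditions
    (hac : (μS ⊗ₘ κ) ≪ μS.prod (μS ⊗ₘ κ).snd)
    (hac' : μS.prod (μS ⊗ₘ κ).snd ≪ (μS ⊗ₘ κ))
    (hint1 : Integrable
      (fun p => Real.log (((μS ⊗ₘ κ).rnDeriv (μS.prod (μS ⊗ₘ κ).snd)) p).toReal) (μS ⊗ₘ κ))
    (hint2 : Integrable
      (fun p => Real.log (((μS.prod (μS ⊗ₘ κ).snd).rnDeriv (μS ⊗ₘ κ)) p).toReal)
      (μS.prod (μS ⊗ₘ κ).snd))
    (hint3 : Integrable (fun p => LE p.2 p.1) (μS ⊗ₘ κ))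
    (hint4 : Integrable (fun p => LE p.2 p.1) (μS.prod (μS ⊗ₘ κ).snd))
    (hint5 : ∀ w, Integrable (LE w) μS) :
    0 ≤ ∫ p, (LP p.2 - LE p.2 p.1) ∂(μS ⊗ₘ κ) :=
  stmt_5_general n μS ℓ hℓmeas hℓpos alpha halpha π0 LE hLE LP hLP V hV hVpos κ hκ hint4 hint5
end

section
/- For the Gaussian mean-estimation Gibbs posterior P_{W|S}(·|Z^n) = N((σ₁²/σ₀²)μ₀ + (σ₁²/σ²)ΣZ_i, σ₁² I_d) with σ₁² = σ₀²σ²/(nσ₀²+σ²), applied to i.i.d. samples Z_i with mean μ and covariance σ_Z² I_d, the expected generalization error under squared loss ℓ(w,z) = ||z−w||² equals 2dσ₀²σ_Z²/(nσ₀² + σ²). -/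
/-!
For squared loss the expected gap between test and training loss of a learner `W` trained on
samples `Z₁, …, Zₙ` distributed as the test point is `(2/n) ∑ᵢ ∑ₖ Cov(Zᵢₖ, Wₖ)`: writing
`E(Zᵢₖ - Wₖ)² = Var Zᵢₖ - 2 Cov(Zᵢₖ, Wₖ) + E(EZᵢₖ - Wₖ)²`, everything except the covariance
cancels against the test loss `Var Zᵢₖ + (EZᵢₖ - Wₖ)²`. For the Gibbs posterior, `Wₖ` is a
constant plus `(σ₁²/σ²) ∑ⱼ Zⱼₖ` plus noise independent of the data, so independence of the
samples leaves `Cov(Zᵢₖ, Wₖ) = (σ₁²/σ²) σ_Z²`, and the gap is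
`2 d σ₁² σ_Z² / σ² = 2 d σ₀² σ_Z² / (n σ₀² + σ²)`.
-/

open MeasureTheory ProbabilityTheory

namespace ProbabilityTheory

variable {Ω : Type*} {mΩ : MeasurableSpace Ω} {μ : Measure Ω}

lemma HasLaw.identDistrib_apply {κ : Type*} {Z : Ω → κ → ℝ} {ν : Measure (κ → ℝ)}
    (hZ : HasLaw Z ν μ) (k : κ) : IdentDistrib (fun ω ↦ Z ω k) (fun z ↦ z k) μ ν :=
  (hZ.identDistrib HasLaw.id).comp (measurable_pi_apply k)

lemma memLp_two_apply_of_hasLaw_pi_gaussianReal {ι : Type*} [Fintype ι] {N : Ω → ι → ℝ}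
    {m : ι → ℝ} {v : ι → NNReal} (hN : HasLaw N (Measure.pi fun k ↦ gaussianReal (m k) (v k)) μ)
    (k : ι) : MemLp (fun ω ↦ N ω k) 2 μ :=
  (HasLaw.id.identDistrib ((measurePreserving_eval _ k).comp_hasLaw hN)).memLp_snd
    (memLp_id_gaussianReal 2)

variable [IsProbabilityMeasure μ] {α : Type*} {mα : MeasurableSpace α} {ν : Measure α}
  [IsProbabilityMeasure ν] {X Y : Ω → ℝ} {f : α → ℝ}

lemma integral_sq_eq_variance_add_sq (hX : MemLp X 2 μ) :
    ∫ ω, X ω ^ 2 ∂μ = Var[X; μ] + μ[X] ^ 2 := by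
  rw [variance_eq_sub hX]
  simp only [Pi.pow_apply]
  ring

lemma integral_sub_const_sq (hX : MemLp X 2 μ) (c : ℝ) :
    ∫ ω, (X ω - c) ^ 2 ∂μ = Var[X; μ] + (μ[X] - c) ^ 2 := by
  have hXc : MemLp (fun ω ↦ X ω - c) 2 μ := hX.sub (memLp_const c)
  rw [integral_sq_eq_variance_add_sq hXc, variance_sub_const hX.aestronglyMeasurable,
    integral_sub (hX.integrable one_le_two) (integrable_const c), integral_const, probReal_univ,
    one_smul]

lemma integral_sub_sq_eq (hX : MemLp X 2 μ) (hY : MemLp Y 2 μ) :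
    ∫ ω, (X ω - Y ω) ^ 2 ∂μ = Var[X; μ] - 2 * cov[X, Y; μ] + ∫ ω, (μ[X] - Y ω) ^ 2 ∂μ := by
  have hXY : MemLp (fun ω ↦ X ω - Y ω) 2 μ := hX.sub hY
  have hcY : MemLp (fun ω ↦ μ[X] - Y ω) 2 μ := (memLp_const _).sub hY
  rw [integral_sq_eq_variance_add_sq hXY, integral_sq_eq_variance_add_sq hcY,
    variance_fun_sub hX hY, variance_const_sub hY.aestronglyMeasurable,
    integral_sub (hX.integrable one_le_two) (hY.integrable one_le_two),
    integral_sub (integrable_const _) (hY.integrable one_le_two), integral_const,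
    probReal_univ, one_smul]
  ring

lemma integrable_integral_sub_sq (hf : MemLp f 2 ν) (hY : MemLp Y 2 μ) :
    Integrable (fun ω ↦ ∫ z, (f z - Y ω) ^ 2 ∂ν) μ := by
  simp_rw [integral_sub_const_sq hf]
  exact (integrable_const _).add ((memLp_const _).sub hY).integrable_sq

lemma integral_integral_sub_sq_sub_sq (hXf : IdentDistrib X f μ ν) (hX : MemLp X 2 μ)
    (hY : MemLp Y 2 μ) :
    ∫ ω, (∫ z, (f z - Y ω) ^ 2 ∂ν - (X ω - Y ω) ^ 2) ∂μ = 2 * cov[X, Y; μ] := by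
  have hf := hXf.memLp_snd hX
  have hXY : MemLp (fun ω ↦ X ω - Y ω) 2 μ := hX.sub hY
  have hcY : MemLp (fun ω ↦ ν[f] - Y ω) 2 μ := (memLp_const _).sub hY
  rw [integral_sub (integrable_integral_sub_sq hf hY) hXY.integrable_sq]
  simp_rw [integral_sub_const_sq hf]
  rw [integral_add (integrable_const _) hcY.integrable_sq, integral_const, probReal_univ,
    one_smul, integral_sub_sq_eq hX hY, hXf.variance_eq, hXf.integral_eq]
  ring

section AffineSum

variable {ι : Type*} [Fintype ι] {X : ι → Ω → ℝ} {N : Ω → ℝ}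

lemma memLp_const_add_mul_sum (hX : ∀ j, MemLp (X j) 2 μ) (c a : ℝ) :
    MemLp (fun ω ↦ c + a * ∑ j, X j ω) 2 μ :=
  (memLp_const c).add ((memLp_finsetSum _ fun j _ ↦ hX j).const_mul a)

lemma covariance_const_add_mul_sum_add (hX : ∀ j, MemLp (X j) 2 μ) (hN : MemLp N 2 μ) {i : ι}
    (hXX : ∀ j ≠ i, IndepFun (X i) (X j) μ) (hXN : IndepFun (X i) N μ) (c a : ℝ) :
    cov[X i, fun ω ↦ c + a * ∑ j, X j ω + N ω; μ] = a * Var[X i; μ] := by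
  have hsum : MemLp (fun ω ↦ ∑ j, X j ω) 2 μ := memLp_finsetSum _ fun j _ ↦ hX j
  change cov[X i, (fun ω ↦ c + a * ∑ j, X j ω) + N; μ] = _
  rw [covariance_add_right (hX i) (memLp_const_add_mul_sum hX c a) hN, hXN.covariance_eq_zero (hX i) hN, add_zero,
    covariance_const_add_right ((hsum.const_mul a).integrable one_le_two),
    covariance_const_mul_right, covariance_fun_sum_right hX (hX i),
    Finset.sum_eq_single i (fun j _ hji ↦ (hXX j hji).covariance_eq_zero (hX i) (hX j))
      (by simp), covariance_self (hX i).aemeasurable]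

end AffineSum

theorem integral_generalizationGap_eq_sum_covariance {ι κ : Type*} [Fintype ι] [Nonempty ι]
    [Fintype κ] {ν : Measure (κ → ℝ)} [IsProbabilityMeasure ν] {Z : ι → Ω → κ → ℝ}
    {W : Ω → κ → ℝ} (hν : ∀ k, MemLp (fun z ↦ z k) 2 ν) (hZ : ∀ i, HasLaw (Z i) ν μ)
    (hW : ∀ k, MemLp (fun ω ↦ W ω k) 2 μ) :
    ∫ ω, ((∫ z, ∑ k, (z k - W ω k) ^ 2 ∂ν) -
        1 / (Fintype.card ι : ℝ) * ∑ i, ∑ k, (Z i ω k - W ω k) ^ 2) ∂μ =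
      2 / Fintype.card ι * ∑ i, ∑ k, cov[fun ω ↦ Z i ω k, fun ω ↦ W ω k; μ] := by
  have hZL2 : ∀ i k, MemLp (fun ω ↦ Z i ω k) 2 μ := fun i k ↦
    ((hZ i).identDistrib_apply k).symm.memLp_snd (hν k)
  have hloss : ∀ ω k, Integrable (fun z ↦ (z k - W ω k) ^ 2) ν := fun ω k ↦
    ((hν k).sub (memLp_const (W ω k))).integrable_sq
  have hgap : ∀ i k, Integrable
      (fun ω ↦ ∫ z, (z k - W ω k) ^ 2 ∂ν - (Z i ω k - W ω k) ^ 2) μ := fun i k ↦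
    (integrable_integral_sub_sq (hν k) (hW k)).sub ((hZL2 i k).sub (hW k)).integrable_sq
  have hcard : (Fintype.card ι : ℝ) ≠ 0 := Nat.cast_ne_zero.mpr Fintype.card_ne_zero
  have hpointwise : ∀ ω, (∫ z, ∑ k, (z k - W ω k) ^ 2 ∂ν) -
      1 / (Fintype.card ι : ℝ) * ∑ i, ∑ k, (Z i ω k - W ω k) ^ 2 =
      1 / (Fintype.card ι : ℝ) *
        ∑ i, ∑ k, (∫ z, (z k - W ω k) ^ 2 ∂ν - (Z i ω k - W ω k) ^ 2) := by
    intro ω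
    rw [integral_finsetSum _ fun k _ ↦ hloss ω k]
    simp only [Finset.sum_sub_distrib, Finset.sum_const, Finset.card_univ, nsmul_eq_mul]
    field_simp
  simp_rw [hpointwise]
  rw [integral_const_mul, integral_finsetSum _ fun i _ ↦ integrable_finsetSum _ fun k _ ↦ hgap i k]
  simp_rw [integral_finsetSum _ fun k _ ↦ hgap _ k,
    integral_integral_sub_sq_sub_sq ((hZ _).identDistrib_apply _) (hZL2 _ _) (hW _),
    ← Finset.mul_sum]
  ring

end ProbabilityTheory

theorem stmt_9_general {Ω : Type*} [MeasurableSpace Ω] (μ : Measure Ω) [IsProbabilityMeasure μ]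
    (d n : ℕ) (hn : 0 < n)
    (sig0 sig sigZ : ℝ) (hs : 0 < sig)
    (sig1sq : ℝ) (hsig1 : sig1sq = sig0 ^ 2 * sig ^ 2 / (n * sig0 ^ 2 + sig ^ 2))
    (mu0 mu : Fin d → ℝ)
    (ν : Measure (Fin d → ℝ)) [IsProbabilityMeasure ν]  -- common law of each sample
    (Z : Fin n → Ω → (Fin d → ℝ)) (hZmeas : ∀ i, Measurable (Z i))
    (hZlaw : ∀ i, μ.map (Z i) = ν)
    (hZindep : ProbabilityTheory.iIndepFun Z μ)
    (hmean : ∀ k, ∫ z, z k ∂ν = mu k)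
    (hmom2 : ∀ k, Integrable (fun z => (z k) ^ 2) ν)
    (hcov : ∀ j k, ∫ z, (z j - mu j) * (z k - mu k) ∂ν = if j = k then sigZ ^ 2 else 0)
    (N : Ω → (Fin d → ℝ)) (hNmeas : Measurable N)
    (hNlaw : μ.map N = Measure.pi fun _ => gaussianReal 0 (Real.toNNReal sig1sq))
    (hNindep : ProbabilityTheory.IndepFun N (fun ω => fun i => Z i ω) μ)
    (W : Ω → (Fin d → ℝ))
    (hW : ∀ ω k, W ω k =
      (sig1sq / sig0 ^ 2) * mu0 k + (sig1sq / sig ^ 2) * (∑ i, Z i ω k) + N ω k) :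
    ∫ ω, ((∫ z, ∑ k, (z k - W ω k) ^ 2 ∂ν) -
        (1 / (n : ℝ)) * ∑ i, ∑ k, (Z i ω k - W ω k) ^ 2) ∂μ =
      2 * d * sig0 ^ 2 * sigZ ^ 2 / (n * sig0 ^ 2 + sig ^ 2) := by
  have : Nonempty (Fin n) := ⟨⟨0, hn⟩⟩
  have hZlaw' : ∀ i, HasLaw (Z i) ν μ := fun i ↦ ⟨(hZmeas i).aemeasurable, hZlaw i⟩
  have hν : ∀ k, MemLp (fun z : Fin d → ℝ ↦ z k) 2 ν := fun k ↦
    (memLp_two_iff_integrable_sq (measurable_pi_apply k).aestronglyMeasurable).mpr (hmom2 k)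
  have hZL2 : ∀ i k, MemLp (fun ω ↦ Z i ω k) 2 μ := fun i k ↦
    ((hZlaw' i).identDistrib_apply k).symm.memLp_snd (hν k)
  have hNL2 : ∀ k, MemLp (fun ω ↦ N ω k) 2 μ :=
    memLp_two_apply_of_hasLaw_pi_gaussianReal ⟨hNmeas.aemeasurable, hNlaw⟩
  have hWk : ∀ k, (fun ω ↦ W ω k) = fun ω ↦
      sig1sq / sig0 ^ 2 * mu0 k + sig1sq / sig ^ 2 * ∑ i, Z i ω k + N ω k := fun k ↦
    funext fun ω ↦ hW ω k
  have hWL2 : ∀ k, MemLp (fun ω ↦ W ω k) 2 μ := fun k ↦ by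
    rw [hWk k]
    exact (memLp_const_add_mul_sum (fun i ↦ hZL2 i k) _ _).add (hNL2 k)
  have hvar : ∀ k, Var[fun z : Fin d → ℝ ↦ z k; ν] = sigZ ^ 2 := fun k ↦ by
    have hkk := hcov k k
    rw [if_pos rfl] at hkk
    rw [variance_eq_integral (measurable_pi_apply k).aemeasurable, hmean k, ← hkk]
    simp only [sq]
  have hcovW : ∀ i k, cov[fun ω ↦ Z i ω k, fun ω ↦ W ω k; μ] = sig1sq / sig ^ 2 * sigZ ^ 2 :=
    fun i k ↦ by
    rw [hWk k, covariance_const_add_mul_sum_add (X := fun j ω ↦ Z j ω k) (fun j ↦ hZL2 j k)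
      (hNL2 k) (fun j hji ↦ (hZindep.indepFun hji.symm).comp (measurable_pi_apply k)
        (measurable_pi_apply k))
      (hNindep.symm.comp (by fun_prop : Measurable fun t : Fin n → Fin d → ℝ ↦ t i k)
        (measurable_pi_apply k)), ((hZlaw' i).identDistrib_apply k).variance_eq, hvar]
  have hgap := integral_generalizationGap_eq_sum_covariance hν hZlaw' hWL2
  rw [Fintype.card_fin] at hgap
  simp only [hgap, hcovW, Finset.sum_const, Finset.card_univ, Fintype.card_fin, nsmul_eq_mul,
    hsig1]
  field_simp

/-- For the Gaussian mean-estimation Gibbs posterior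
`W = (σ₁²/σ₀²)μ₀ + (σ₁²/σ²)∑ᵢ Zᵢ + N`, `N ~ N(0, σ₁² I_d)`, `σ₁² = σ₀²σ²/(nσ₀²+σ²)`,
applied to i.i.d. samples `Zᵢ` with mean `μ` and covariance `σ_Z² I_d`, the expected
generalization error under squared loss `ℓ(w,z) = ‖z−w‖²` is `2dσ₀²σ_Z²/(nσ₀²+σ²)`. -/
theorem stmt_9 {Ω : Type*} [MeasurableSpace Ω] (μ : Measure Ω) [IsProbabilityMeasure μ]
    (d n : ℕ) (hd : 0 < d) (hn : 0 < n)
    (sig0 sig sigZ : ℝ) (h0 : 0 < sig0) (hs : 0 < sig) (hZ : 0 < sigZ)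
    (sig1sq : ℝ) (hsig1 : sig1sq = sig0 ^ 2 * sig ^ 2 / (n * sig0 ^ 2 + sig ^ 2))
    (mu0 mu : Fin d → ℝ)
    (ν : Measure (Fin d → ℝ)) [IsProbabilityMeasure ν]  -- common law of each sample
    (Z : Fin n → Ω → (Fin d → ℝ)) (hZmeas : ∀ i, Measurable (Z i))
    (hZlaw : ∀ i, μ.map (Z i) = ν)
    (hZindep : ProbabilityTheory.iIndepFun Z μ)
    (hmean : ∀ k, ∫ z, z k ∂ν = mu k)
    (hmom2 : ∀ k, Integrable (fun z => (z k) ^ 2) ν)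
    (hcov : ∀ j k, ∫ z, (z j - mu j) * (z k - mu k) ∂ν = if j = k then sigZ ^ 2 else 0)
    (N : Ω → (Fin d → ℝ)) (hNmeas : Measurable N)
    (hNlaw : μ.map N = Measure.pi fun _ => gaussianReal 0 (Real.toNNReal sig1sq))
    (hNindep : ProbabilityTheory.IndepFun N (fun ω => fun i => Z i ω) μ)
    (W : Ω → (Fin d → ℝ))
    (hW : ∀ ω k, W ω k =
      (sig1sq / sig0 ^ 2) * mu0 k + (sig1sq / sig ^ 2) * (∑ i, Z i ω k) + N ω k)
    -- integrability of the two risk terms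
    (hint1 : Integrable (fun ω => ∫ z, ∑ k, (z k - W ω k) ^ 2 ∂ν) μ)
    (hint2 : Integrable (fun ω => (1 / (n : ℝ)) * ∑ i, ∑ k, (Z i ω k - W ω k) ^ 2) μ)
    (hint3 : ∀ ω, Integrable (fun z => ∑ k, (z k - W ω k) ^ 2) ν) :
    ∫ ω, ((∫ z, ∑ k, (z k - W ω k) ^ 2 ∂ν) -
        (1 / (n : ℝ)) * ∑ i, ∑ k, (Z i ω k - W ω k) ^ 2) ∂μ =
      2 * d * sig0 ^ 2 * sigZ ^ 2 / (n * sig0 ^ 2 + sig ^ 2) :=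
  stmt_9_general μ d n hn sig0 sig sigZ hs sig1sq hsig1 mu0 mu ν Z hZmeas hZlaw hZindep hmean hmom2
    hcov N hNmeas hNlaw hNindep W hW
end
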